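/- For every vertex v of the path graph G(P) of a convex point set P, the distance in G(P) from v to the set B of boundary paths equals the number of diagonals in the path represented by v. -/

import Mathlib

/-!
Along an edge of `G(P)` a path exchanges one edge for another, so its number of diagonals changes
by at most one; boundary paths have no diagonals, and any two of them are adjacent since each is
the polygon minus one side. Hence the distance is at least the number of diagonals.

Conversely, let `p j p (j+1)` be the last diagonal of the path `p 0, …, p (n-1)`. The tail
`p (j+1), …, p (n-1)` runs along the hull in one direction, and by planarity `p 0, …, p (j-1)` lie
on one side of the chord `p j p (j+1)`; so the tail covers the other side and ends next to `p j`.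
Reversing the tail replaces the diagonal by the hull edge `p j p (n-1)`, which crosses nothing.
-/

namespace PG

/-- The `k`-th vertex (mod `n`) of the convex polygon. -/
def pt (n : ℕ) (hn : 0 < n) (k : ℕ) : Fin n := ⟨k % n, Nat.mod_lt _ hn⟩

/-- `e` is a boundary (convex hull) edge of the convex `n`-gon. -/
def IsHullEdge {n : ℕ} (e : Sym2 (Fin n)) : Prop :=
  ∃ a b : Fin n, e = s(a, b) ∧ ((a.val + 1) % n = b.val ∨ (b.val + 1) % n = a.val)

instance {n : ℕ} : DecidablePred (IsHullEdge (n := n)) := fun _ => by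
  unfold IsHullEdge; infer_instance

/-- Two chords of the convex `n`-gon cross (intersect in interior points):
their endpoint pairs are all distinct and separate each other in the cyclic order. -/
def Crosses {n : ℕ} (e f : Sym2 (Fin n)) : Prop :=
  ∃ a b c d : Fin n, e = s(a, b) ∧ f = s(c, d) ∧
    a ≠ b ∧ c ≠ d ∧ a ≠ c ∧ a ≠ d ∧ b ≠ c ∧ b ≠ d ∧
    (((c.val + n - a.val) % n < (b.val + n - a.val) % n) ↔
      ¬((d.val + n - a.val) % n < (b.val + n - a.val) % n))

instance {n : ℕ} (e f : Sym2 (Fin n)) : Decidable (Crosses e f) := by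
  unfold Crosses; infer_instance

/-- The edge set of the spanning path visiting the points in the order given
by the permutation `p`. -/
def pathEdges {n : ℕ} (p : Equiv.Perm (Fin n)) : Finset (Sym2 (Fin n)) :=
  Finset.univ.filter (fun e => ∃ i j : Fin n, e = s(p i, p j) ∧ j.val = i.val + 1)

/-- `E` is the edge set of a non-crossing (plane) spanning path. -/
def IsNCPath {n : ℕ} (E : Finset (Sym2 (Fin n))) : Prop :=
  (∃ p : Equiv.Perm (Fin n), E = pathEdges p) ∧ ∀ e ∈ E, ∀ f ∈ E, ¬ Crosses e f

instance {n : ℕ} : DecidablePred (IsNCPath (n := n)) := fun _ => by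
  unfold IsNCPath pathEdges; infer_instance

/-- Vertices of the path graph `G(P)`: non-crossing spanning paths. -/
def PVert (n : ℕ) := {E : Finset (Sym2 (Fin n)) // IsNCPath E}

instance {n : ℕ} : Fintype (PVert n) := Subtype.fintype _
instance {n : ℕ} : DecidableEq (PVert n) := Subtype.instDecidableEq

/-- The path graph `G(P)`: two plane spanning paths are adjacent iff their
edge sets differ in exactly two edges. -/
def pathGraph (n : ℕ) : SimpleGraph (PVert n) where
  Adj u v := u ≠ v ∧ (u.1 \ v.1 ∪ v.1 \ u.1).card = 2
  symm := by constructor; rintro u v ⟨h1, h2⟩; exact ⟨h1.symm, by rwa [Finset.union_comm]⟩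
  loopless := by constructor; rintro u ⟨h, _⟩; exact h rfl

instance {n : ℕ} : DecidableRel (pathGraph n).Adj := fun u v => by
  unfold pathGraph; infer_instance

/-- `v` is a boundary path: all its edges are hull edges. -/
def IsBoundary {n : ℕ} (v : PVert n) : Prop := ∀ e ∈ v.1, IsHullEdge e

/-- Number of diagonals (the level) of a path. -/
def diagCount {n : ℕ} (v : PVert n) : ℕ :=
  (v.1.filter (fun e => ¬ IsHullEdge e)).card

/-- Degree of a point in an edge set. -/
def degIn {n : ℕ} (E : Finset (Sym2 (Fin n))) (x : Fin n) : ℕ :=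
  (E.filter (fun e => x ∈ e)).card

end PG

open scoped Fin.CommRing

namespace Nat

theorem add_sub_mod_eq_ite {n a x : ℕ} (ha : a < n) (hx : x < n) :
    (x + n - a) % n = if a ≤ x then x - a else x + n - a := by
  split_ifs with h
  · rw [show x + n - a = x - a + n by omega, Nat.add_mod_right, Nat.mod_eq_of_lt (by omega)]
  · exact Nat.mod_eq_of_lt (by omega)

theorem succ_mod_eq_ite {n x : ℕ} (hx : x < n) :
    (x + 1) % n = if x + 1 = n then 0 else x + 1 := by
  split_ifs with h
  · rw [h, Nat.mod_self]
  · exact Nat.mod_eq_of_lt (by omega)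

end Nat

namespace Fin

theorem natCast_inj_of_lt {n s t : ℕ} [NeZero n] (hs : s < n) (ht : t < n)
    (h : (s : Fin n) = t) : s = t := by
  simpa [Fin.val_cast_of_lt hs, Fin.val_cast_of_lt ht] using congrArg Fin.val h

theorem val_sub_eq_mod {n : ℕ} (x a : Fin n) : (x - a).val = (x.val + n - a.val) % n := by
  rw [Fin.val_sub]; congr 1; have := a.isLt; omega

theorem val_neg_lt_val_neg_iff {n : ℕ} [NeZero n] {z w : Fin n} (hz : z ≠ 0) (hw : w ≠ 0) :
    (-z).val < (-w).val ↔ w.val < z.val := by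
  rw [Fin.val_neg, Fin.val_neg, if_neg hz, if_neg hw]
  have := z.isLt; have := w.isLt
  omega

end Fin

namespace PG

section HullEdges

variable {n : ℕ}

theorem isHullEdge_mk_iff_val {x y : Fin n} :
    IsHullEdge s(x, y) ↔ (x.val + 1) % n = y.val ∨ (y.val + 1) % n = x.val := by
  refine ⟨fun ⟨a, b, hab, h⟩ => ?_, fun h => ⟨x, y, rfl, h⟩⟩
  rcases Sym2.eq_iff.mp hab with ⟨rfl, rfl⟩ | ⟨rfl, rfl⟩
  exacts [h, h.symm]

theorem isHullEdge_mk_iff [NeZero n] {x y : Fin n} :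
    IsHullEdge s(x, y) ↔ y = x + 1 ∨ x = y + 1 := by
  simp only [isHullEdge_mk_iff_val, Fin.ext_iff, Fin.val_add, Fin.val_one', Nat.add_mod_mod]
  tauto

theorem Crosses.not_isHullEdge {e f : Sym2 (Fin n)} (h : Crosses e f) :
    ¬ IsHullEdge e ∧ ¬ IsHullEdge f := by
  obtain ⟨a, b, c, d, rfl, rfl, hab, hcd, hac, had, hbc, hbd, hsep⟩ := h
  simp only [ne_eq, Fin.ext_iff, isHullEdge_mk_iff_val] at *
  rw [Nat.add_sub_mod_eq_ite a.isLt c.isLt, Nat.add_sub_mod_eq_ite a.isLt d.isLt,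
    Nat.add_sub_mod_eq_ite a.isLt b.isLt] at hsep
  have := a.isLt; have := b.isLt; have := c.isLt; have := d.isLt
  constructor <;> rintro (h | h) <;>
    rw [Nat.succ_mod_eq_ite (Fin.isLt _)] at h <;> split_ifs at h hsep <;> omega

end HullEdges

section Paths

variable {n : ℕ} [NeZero n] (p : Equiv.Perm (Fin n))

theorem perm_natCast_inj {s t : ℕ} (hs : s < n) (ht : t < n) (h : p s = p t) : s = t :=
  Fin.natCast_inj_of_lt hs ht (p.injective h)

theorem exists_perm_natCast_eq (x : Fin n) : ∃ m < n, p m = x :=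
  ⟨(p.symm x).val, (p.symm x).isLt, by simp⟩

theorem perm_mk_natCast_inj {s t s' t' : ℕ} (hs : s < n) (ht : t < n) (hs' : s' < n)
    (ht' : t' < n) (h : s(p s, p t) = s(p s', p t')) : s = s' ∧ t = t' ∨ s = t' ∧ t = s' := by
  rcases Sym2.eq_iff.mp h with ⟨h1, h2⟩ | ⟨h1, h2⟩
  · exact Or.inl ⟨perm_natCast_inj p hs hs' h1, perm_natCast_inj p ht ht' h2⟩
  · exact Or.inr ⟨perm_natCast_inj p hs ht' h1, perm_natCast_inj p ht hs' h2⟩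

theorem mem_pathEdges {e : Sym2 (Fin n)} :
    e ∈ pathEdges p ↔ ∃ t, t + 1 < n ∧ e = s(p t, p (t + 1 : ℕ)) := by
  simp only [pathEdges, Finset.mem_filter, Finset.mem_univ, true_and]
  constructor
  · rintro ⟨i, j, rfl, hij⟩
    refine ⟨i, hij ▸ j.isLt, ?_⟩
    rw [← hij, Fin.cast_val_eq_self, Fin.cast_val_eq_self]
  · rintro ⟨t, ht, rfl⟩
    exact ⟨t, (t + 1 : ℕ), rfl, by rw [Fin.val_cast_of_lt ht, Fin.val_cast_of_lt (by omega)]⟩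

theorem card_pathEdges : (pathEdges p).card = n - 1 := by
  have himage : pathEdges p =
      (Finset.range (n - 1)).image (fun t : ℕ => s(p t, p (t + 1 : ℕ))) := by
    ext e
    simp only [mem_pathEdges, Finset.mem_image, Finset.mem_range]
    exact ⟨fun ⟨t, ht, he⟩ => ⟨t, by omega, he.symm⟩,
      fun ⟨t, ht, he⟩ => ⟨t, by omega, he.symm⟩⟩
  rw [himage, Finset.card_image_of_injOn, Finset.card_range]
  intro s hs t ht hst
  simp only [Finset.coe_range, Set.mem_Iio] at hs ht
  have := perm_mk_natCast_inj p (by omega) (by omega) (by omega) (by omega) hst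
  omega

end Paths

section HullPath

variable {n : ℕ} [NeZero n]

theorem eq_add_or_eq_sub_of_isHullEdge {q : ℕ → Fin n} {L : ℕ}
    (hhull : ∀ i < L, IsHullEdge s(q i, q (i + 1)))
    (hnb : ∀ i, i + 2 ≤ L → q (i + 2) ≠ q i) :
    (∀ i ≤ L, q i = q 0 + i) ∨ (∀ i ≤ L, q i = q 0 - i) := by
  obtain ⟨ε, hε, hstep⟩ :
      ∃ ε : Fin n, (ε = 1 ∨ ε = -1) ∧ ∀ i < L, q (i + 1) - q i = ε := by
    have hd : ∀ i < L, q (i + 1) - q i = 1 ∨ q (i + 1) - q i = -1 := fun i hi => by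
      rcases isHullEdge_mk_iff.mp (hhull i hi) with h | h <;> rw [h] <;> simp
    rcases Nat.eq_zero_or_pos L with rfl | hL
    · exact ⟨1, Or.inl rfl, by simp⟩
    refine ⟨_, hd 0 hL, fun i hi => ?_⟩
    induction i with
    | zero => rfl
    | succ i ih =>
      have hback : q (i + 2) - q (i + 1) + (q (i + 1) - q i) ≠ 0 := by
        rw [sub_add_sub_cancel, sub_ne_zero]; exact hnb i (by omega)
      rw [ih (by omega)] at hback
      show q (i + 2) - q (i + 1) = _
      rcases hd (i + 1) hi with h | h <;> rcases hd 0 hL with h0 | h0 <;> simp_all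
  have hq : ∀ i ≤ L, q i = q 0 + i • ε := by
    intro i hi
    induction i with
    | zero => simp
    | succ i ih => rw [succ_nsmul, ← add_assoc, ← ih (by omega), ← hstep i hi, add_sub_cancel]
  rcases hε with rfl | rfl
  · exact Or.inl fun i hi => by simpa using hq i hi
  · exact Or.inr fun i hi => by simpa [sub_eq_add_neg] using hq i hi

end HullPath

section Chord

variable {n : ℕ}

/-- A point `x ≠ a` lies strictly between `a` and `b` in increasing cyclic order iff
`(x - a).val < (b - a).val`, so this says that `S` meets only one side of the chord `ab`. -/
def OneSided (a b : Fin n) (S : Set (Fin n)) : Prop :=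
  ∀ x ∈ S, ∀ y ∈ S, ((x - a).val < (b - a).val ↔ (y - a).val < (b - a).val)

theorem OneSided.mono {a b : Fin n} {S T : Set (Fin n)} (h : OneSided a b S) (hTS : T ⊆ S) :
    OneSided a b T :=
  fun x hx y hy => h x (hTS hx) y (hTS hy)

variable [NeZero n]

theorem val_add_natCast_sub (a : Fin n) {k : ℕ} (hk : k < n) : (a + k - a).val = k := by
  rw [add_sub_cancel_left, Fin.val_cast_of_lt hk]

-- Otherwise `a + (L + 1)` and `b + 1` would be points off the arc on opposite sides of `ab`.
theorem eq_add_of_oneSided {a b : Fin n} {L : ℕ} (hL : L + 1 < n) (hab : a ≠ b + 1)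
    (hb : ∀ i ≤ L, b ≠ a + i)
    (hside : OneSided a b {x | x ≠ b ∧ ∀ i ≤ L, x ≠ a + i}) :
    b = a + L + 1 := by
  set K := (b - a).val with hK
  have hbK : b = a + K := by rw [hK, Fin.cast_val_eq_self, add_sub_cancel]
  have hinj : ∀ {k i : ℕ}, k < n → i < n → a + k = a + i → k = i := fun hk hi h =>
    Fin.natCast_inj_of_lt hk hi (add_left_cancel h)
  have hLK : L < K := by
    by_contra h
    exact hb K (by omega) hbK
  have hKn : K + 1 < n := by
    by_contra h
    apply hab
    rw [hbK, add_assoc, ← Nat.cast_add_one, show K + 1 = n by omega, Fin.natCast_self, add_zero]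
  have hoff : ∀ k < n, L < k → k ≠ K →
      a + k ∈ {x | x ≠ b ∧ ∀ i ≤ L, x ≠ a + i} :=
    fun k hk hLk hkK => ⟨fun h => hkK (hinj hk (b - a).isLt (h.trans hbK)),
      fun i hi h => by have := hinj hk (by omega) h; omega⟩
  by_contra hne
  have hLK' : L + 1 ≠ K := fun h => hne (by rw [hbK, ← h, Nat.cast_add_one, add_assoc])
  have := hside _ (hoff (L + 1) hL (by omega) hLK') _ (hoff (K + 1) hKn (by omega) (by omega))
  rw [val_add_natCast_sub a hL, val_add_natCast_sub a hKn] at this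
  omega

-- The reflection `x ↦ -x` reverses the cyclic order and reduces this to `eq_add_of_oneSided`.
theorem eq_sub_of_oneSided {a b : Fin n} {L : ℕ} (hL : L + 1 < n) (hab : b ≠ a + 1)
    (hb : ∀ i ≤ L, b ≠ a - i)
    (hside : OneSided a b {x | x ≠ b ∧ ∀ i ≤ L, x ≠ a - i}) :
    b = a - L - 1 := by
  have hneg : ∀ {x y : Fin n}, -x ≠ y ↔ x ≠ -y := fun {x y} => by
    rw [ne_eq, neg_eq_iff_eq_neg]
  have hneg_sub : ∀ {x : Fin n} {i : ℕ}, -x ≠ a - i ↔ x ≠ -a + i := fun {x i} => by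
    rw [hneg, neg_sub, sub_eq_neg_add]
  have hreflect : ∀ z ∈ {x | x ≠ -b ∧ ∀ i ≤ L, x ≠ -a + i},
      ((z - -a).val < (-b - -a).val ↔ ¬ (-z - a).val < (b - a).val) := by
    rintro z ⟨hzb, hza⟩
    have hza' : -z - a ≠ 0 := sub_ne_zero.mpr (hneg.mpr (by simpa using hza 0 (Nat.zero_le _)))
    have hba : b - a ≠ 0 := sub_ne_zero.mpr (by simpa using hb 0 (Nat.zero_le _))
    have hval : (-z - a).val ≠ (b - a).val := fun h =>
      hneg.mpr hzb (sub_left_inj.mp (Fin.ext h))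
    rw [show z - -a = -(-z - a) by abel, show -b - -a = -(b - a) by abel,
      Fin.val_neg_lt_val_neg_iff hza' hba]
    omega
  have key := eq_add_of_oneSided (a := -a) (b := -b) hL
    (fun h => hab (by linear_combination h))
    (fun i hi => hneg_sub.mp (by rw [neg_neg]; exact hb i hi)) ?_
  · rw [← neg_neg b, key]; abel
  rintro x hx y hy
  rw [hreflect x hx, hreflect y hy, not_iff_not]
  exact hside (-x) ⟨hneg.mpr hx.1, fun i hi => hneg_sub.mpr (hx.2 i hi)⟩
    (-y) ⟨hneg.mpr hy.1, fun i hi => hneg_sub.mpr (hy.2 i hi)⟩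

end Chord

section NonCrossing

variable {n : ℕ} [NeZero n] (p : Equiv.Perm (Fin n))

theorem oneSided_prefix (hnc : ∀ e ∈ pathEdges p, ∀ f ∈ pathEdges p, ¬ Crosses e f)
    {j : ℕ} (hj : j + 1 < n) : OneSided (p (j + 1 : ℕ)) (p j) {x | ∃ m < j, p m = x} := by
  set side := fun m : ℕ => (p m - p (j + 1 : ℕ)).val < (p j - p (j + 1 : ℕ)).val
  suffices h : ∀ m < j, side m ↔ side 0 by
    rintro _ ⟨m, hm, rfl⟩ _ ⟨m', hm', rfl⟩
    exact (h m hm).trans (h m' hm').symm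
  intro m hm
  induction m with
  | zero => rfl
  | succ m ih =>
    refine Iff.trans ?_ (ih (by omega))
    have hne : ∀ {s t : ℕ}, s < n → t < n → s ≠ t → p s ≠ p t :=
      fun hs ht hst h => hst (perm_natCast_inj p hs ht h)
    refine not_not.mp fun hsep => hnc _ ((mem_pathEdges p).mpr ⟨j, hj, rfl⟩) _
      ((mem_pathEdges p).mpr ⟨m, by omega, rfl⟩) ⟨p (j + 1 : ℕ), p j, p m, p (m + 1 : ℕ),
        Sym2.eq_swap, rfl, hne hj (by omega) (by omega), hne (by omega) (by omega) (by omega),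
        hne hj (by omega) (by omega), hne hj (by omega) (by omega),
        hne (by omega) (by omega) (by omega), hne (by omega) (by omega) (by omega), ?_⟩
    simp only [← Fin.val_sub_eq_mod]
    tauto

theorem isHullEdge_last_of_lastDiagonal
    (hnc : ∀ e ∈ pathEdges p, ∀ f ∈ pathEdges p, ¬ Crosses e f) {j : ℕ} (hj : j + 1 < n)
    (hdiag : ¬ IsHullEdge s(p j, p (j + 1 : ℕ)))
    (hhull : ∀ t, j < t → t + 1 < n → IsHullEdge s(p t, p (t + 1 : ℕ))) :
    IsHullEdge s(p j, p (n - 1 : ℕ)) := by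
  set a := p (j + 1 : ℕ)
  set b := p j
  set L := n - 2 - j
  set q : ℕ → Fin n := fun i => p (j + 1 + i : ℕ) with hq
  have hL : L + 1 < n := by omega
  have hqL : q L = p (n - 1 : ℕ) := by simp only [hq]; congr 2; omega
  have hbq : ∀ i ≤ L, b ≠ q i := fun i hi h => by
    have := perm_natCast_inj p (by omega) (by omega) h; omega
  have hside : OneSided a b {x | x ≠ b ∧ ∀ i ≤ L, x ≠ q i} := by
    refine (oneSided_prefix p hnc hj).mono fun x ⟨hxb, hxq⟩ => ?_
    obtain ⟨m, hm, rfl⟩ := exists_perm_natCast_eq p x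
    refine ⟨m, ?_, rfl⟩
    by_contra hmj
    rcases Nat.eq_or_lt_of_le (not_lt.mp hmj) with rfl | hjm
    · exact hxb rfl
    · exact hxq (m - j - 1) (by omega) (by simp only [hq]; congr 2; omega)
  have hstep : ∀ i < L, IsHullEdge s(q i, q (i + 1)) :=
    fun i hi => hhull (j + 1 + i) (by omega) (by omega)
  have hnb : ∀ i, i + 2 ≤ L → q (i + 2) ≠ q i := fun i hi h => by
    have := perm_natCast_inj p (by omega) (by omega) h; omega
  obtain ⟨hab, hba⟩ := not_or.mp (isHullEdge_mk_iff.not.mp hdiag)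
  rw [← hqL, isHullEdge_mk_iff]
  rcases eq_add_or_eq_sub_of_isHullEdge hstep hnb with htail | htail
  · refine .inr (htail L le_rfl ▸ eq_add_of_oneSided hL hab (fun i hi => htail i hi ▸ hbq i hi)
      (hside.mono fun x ⟨hxb, hxq⟩ => ⟨hxb, fun i hi => htail i hi ▸ hxq i hi⟩))
  · refine .inl ?_
    rw [htail L le_rfl, eq_sub_of_oneSided hL hba (fun i hi => htail i hi ▸ hbq i hi)
      (hside.mono fun x ⟨hxb, hxq⟩ => ⟨hxb, fun i hi => htail i hi ▸ hxq i hi⟩),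
      sub_add_cancel]

end NonCrossing

section Flip

variable {n : ℕ} [NeZero n]

-- Fixes the positions `0, …, j` and reverses `j + 1, …, n - 1`.
def tailReversal (j : ℕ) : Equiv.Perm (Fin n) :=
  Function.Involutive.toPerm (fun i => if i.val ≤ j then i else (j : Fin n) - i) <| by
    intro i
    by_cases hi : i.val ≤ j
    · simp only [if_pos hi]
    · have hjn : j < n := by have := i.isLt; omega
      have hval : ((j : Fin n) - i).val = n + j - i.val := by
        rw [Fin.val_sub, Fin.val_cast_of_lt hjn, Nat.mod_eq_of_lt (by omega)]; omega
      simp only [if_neg hi, hval, show ¬ n + j - i.val ≤ j by have := i.isLt; omega,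
        sub_sub_cancel, ↓reduceIte]

theorem tailReversal_natCast {j t : ℕ} (ht : t < n) :
    tailReversal j (t : Fin n) = if t ≤ j then (t : Fin n) else ((n + j - t : ℕ) : Fin n) := by
  show (if (t : Fin n).val ≤ j then (t : Fin n) else (j : Fin n) - t) = _
  rw [Fin.val_cast_of_lt ht]
  split_ifs with h
  · rfl
  · rw [Nat.cast_sub (by omega), Nat.cast_add, Fin.natCast_self, zero_add]

theorem pathEdges_trans_tailReversal (p : Equiv.Perm (Fin n)) {j : ℕ} (hj : j + 1 < n) :
    pathEdges ((tailReversal j).trans p) =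
      insert s(p j, p (n - 1 : ℕ)) ((pathEdges p).erase s(p j, p (j + 1 : ℕ))) := by
  have hsub : pathEdges ((tailReversal j).trans p) ⊆
      insert s(p j, p (n - 1 : ℕ)) ((pathEdges p).erase s(p j, p (j + 1 : ℕ))) := by
    intro e he
    obtain ⟨t, ht, rfl⟩ := (mem_pathEdges _).mp he
    have hne : ∀ {s}, s + 1 < n → s ≠ j →
        s(p s, p (s + 1 : ℕ)) ≠ s(p j, p (j + 1 : ℕ)) :=
      fun hs hsj h => by
        have := perm_mk_natCast_inj p (by omega) hs (by omega) hj h; omega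
    simp only [Equiv.trans_apply, tailReversal_natCast ht, tailReversal_natCast (by omega : t < n)]
    rcases lt_trichotomy t j with htj | rfl | htj
    · rw [if_pos htj.le, if_pos (by omega : t + 1 ≤ j)]
      exact Finset.mem_insert_of_mem
        (Finset.mem_erase.mpr ⟨hne ht htj.ne, (mem_pathEdges p).mpr ⟨t, ht, rfl⟩⟩)
    · rw [if_pos le_rfl, if_neg (by omega), show n + t - (t + 1) = n - 1 by omega]
      exact Finset.mem_insert_self _ _
    · rw [if_neg (by omega), if_neg (by omega), show n + j - t = n + j - (t + 1) + 1 by omega]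
      exact Finset.mem_insert_of_mem (Finset.mem_erase.mpr
        ⟨fun h => hne (s := n + j - (t + 1)) (by omega) (by omega) (Sym2.eq_swap.trans h),
          (mem_pathEdges p).mpr ⟨n + j - (t + 1), by omega, Sym2.eq_swap⟩⟩)
  refine Finset.eq_of_subset_of_card_le hsub ?_
  have hd : s(p j, p (j + 1 : ℕ)) ∈ pathEdges p := (mem_pathEdges p).mpr ⟨j, hj, rfl⟩
  calc _ ≤ ((pathEdges p).erase s(p j, p (j + 1 : ℕ))).card + 1 := Finset.card_insert_le _ _
    _ = (pathEdges ((tailReversal j).trans p)).card := by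
      rw [Finset.card_erase_of_mem hd, card_pathEdges, card_pathEdges]; omega

end Flip

section Exchange

variable {n : ℕ}

theorem pathGraph_adj_of_exchange {v w : PVert n} {d h : Sym2 (Fin n)} (hd : d ∈ v.1)
    (hh : h ∉ v.1) (hw : w.1 = insert h (v.1.erase d)) : (pathGraph n).Adj v w := by
  refine ⟨fun hvw => hh (hvw ▸ hw ▸ Finset.mem_insert_self h _), ?_⟩
  have hdh : d ≠ h := fun hdh => hh (hdh ▸ hd)
  have h₁ : v.1 \ w.1 = {d} := by
    ext e; simp only [hw, Finset.mem_sdiff, Finset.mem_insert, Finset.mem_erase,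
      Finset.mem_singleton]; grind
  have h₂ : w.1 \ v.1 = {h} := by
    ext e; simp only [hw, Finset.mem_sdiff, Finset.mem_insert, Finset.mem_erase,
      Finset.mem_singleton]; grind
  rw [h₁, h₂, Finset.card_union_of_disjoint (Finset.disjoint_singleton.mpr hdh)]
  rfl

theorem diagCount_add_one_of_exchange {v w : PVert n} {d h : Sym2 (Fin n)} (hd : d ∈ v.1)
    (hdiag : ¬ IsHullEdge d) (hh : IsHullEdge h) (hw : w.1 = insert h (v.1.erase d)) :
    diagCount w + 1 = diagCount v := by
  rw [diagCount, diagCount, hw, Finset.filter_insert, if_neg (not_not_intro hh),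
    Finset.filter_erase, Finset.card_erase_add_one (Finset.mem_filter.mpr ⟨hd, hdiag⟩)]

end Exchange

section Descent

variable {n : ℕ}

theorem forall_not_crosses_insert {E : Finset (Sym2 (Fin n))} {h : Sym2 (Fin n)}
    (hnc : ∀ e ∈ E, ∀ f ∈ E, ¬ Crosses e f) (hh : IsHullEdge h) :
    ∀ e ∈ insert h E, ∀ f ∈ insert h E, ¬ Crosses e f := by
  intro e he f hf hef
  rcases Finset.mem_insert.mp he with rfl | he
  · exact hef.not_isHullEdge.1 hh
  rcases Finset.mem_insert.mp hf with rfl | hf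
  · exact hef.not_isHullEdge.2 hh
  exact hnc e he f hf hef

theorem exists_lastDiagonal [NeZero n] (p : Equiv.Perm (Fin n)) {e : Sym2 (Fin n)}
    (he : e ∈ pathEdges p) (hdiag : ¬ IsHullEdge e) :
    ∃ j, j + 1 < n ∧ ¬ IsHullEdge s(p j, p (j + 1 : ℕ)) ∧
      ∀ t, j < t → t + 1 < n → IsHullEdge s(p t, p (t + 1 : ℕ)) := by
  obtain ⟨t₀, ht₀, rfl⟩ := (mem_pathEdges p).mp he
  set P := fun t : ℕ => t + 1 < n ∧ ¬ IsHullEdge s(p t, p (t + 1 : ℕ))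
  obtain ⟨hj, hjdiag⟩ :=
    Nat.findGreatest_spec (P := P) (m := t₀) (n := n) (by omega) ⟨ht₀, hdiag⟩
  exact ⟨_, hj, hjdiag, fun t ht htn =>
    not_not.mp fun h => Nat.findGreatest_is_greatest ht (by omega) ⟨htn, h⟩⟩

theorem exists_adj_diagCount_add_one (v : PVert n) (hv : diagCount v ≠ 0) :
    ∃ w, (pathGraph n).Adj v w ∧ diagCount w + 1 = diagCount v := by
  obtain ⟨d, hd⟩ := Finset.card_pos.mp (Nat.pos_of_ne_zero hv)
  obtain ⟨hdv, hddiag⟩ := Finset.mem_filter.mp hd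
  have : NeZero n := NeZero.of_pos (d.inductionOn fun x _ => x.pos)
  obtain ⟨⟨p, hp⟩, hnc⟩ := v.2
  rw [hp] at hdv hnc
  obtain ⟨j, hj, hdiag, hhull⟩ := exists_lastDiagonal p hdv hddiag
  have hnew := isHullEdge_last_of_lastDiagonal p hnc hj hdiag hhull
  have hnew_not_mem : s(p j, p (n - 1 : ℕ)) ∉ pathEdges p := by
    intro hmem
    obtain ⟨t, ht, he⟩ := (mem_pathEdges p).mp hmem
    rcases perm_mk_natCast_inj p (by omega) (by omega) (by omega) (by omega) he with
      ⟨rfl, h⟩ | ⟨-, h⟩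
    · exact hdiag (by rwa [h] at hnew)
    · omega
  have hnc' := forall_not_crosses_insert (E := (pathEdges p).erase s(p j, p (j + 1 : ℕ)))
    (fun e he f hf => hnc e (Finset.mem_of_mem_erase he) f (Finset.mem_of_mem_erase hf)) hnew
  let w : PVert n := ⟨_, ⟨_, (pathEdges_trans_tailReversal p hj).symm⟩, hnc'⟩
  have hmem : s(p j, p (j + 1 : ℕ)) ∈ v.1 := hp ▸ (mem_pathEdges p).mpr ⟨j, hj, rfl⟩
  exact ⟨w, pathGraph_adj_of_exchange hmem (hp ▸ hnew_not_mem) (by rw [hp]),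
    diagCount_add_one_of_exchange hmem hdiag hnew (by rw [hp])⟩

end Descent

section Distance

variable {n : ℕ}

theorem diagCount_eq_zero_iff {v : PVert n} : diagCount v = 0 ↔ IsBoundary v := by
  simp only [diagCount, Finset.card_eq_zero, Finset.filter_eq_empty_iff, not_not, IsBoundary]

theorem card_edges (v : PVert n) : v.1.card = n - 1 := by
  obtain ⟨⟨p, hp⟩, -⟩ := v.2
  rw [hp]
  rcases n with _ | n
  · simp [pathEdges]
  · exact card_pathEdges p

theorem card_sdiff_eq_one_of_adj {u w : PVert n} (h : (pathGraph n).Adj u w) :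
    (u.1 \ w.1).card = 1 := by
  have h₂ := h.2
  rw [Finset.card_union_of_disjoint disjoint_sdiff_sdiff] at h₂
  have hu := Finset.card_sdiff_add_card_inter u.1 w.1
  have hw := Finset.card_sdiff_add_card_inter w.1 u.1
  rw [Finset.inter_comm, card_edges] at hw
  rw [card_edges] at hu
  omega

theorem diagCount_le_of_adj {u w : PVert n} (h : (pathGraph n).Adj u w) :
    diagCount u ≤ diagCount w + 1 := by
  calc diagCount u ≤ (w.1.filter (fun e => ¬ IsHullEdge e) ∪ (u.1 \ w.1)).card := by
        refine Finset.card_le_card fun e he => ?_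
        simp only [Finset.mem_filter, Finset.mem_union, Finset.mem_sdiff] at he ⊢
        tauto
    _ ≤ diagCount w + (u.1 \ w.1).card := Finset.card_union_le _ _
    _ = diagCount w + 1 := by rw [card_sdiff_eq_one_of_adj h]

theorem diagCount_le_length_add {u w : PVert n} (wk : (pathGraph n).Walk u w) :
    diagCount u ≤ wk.length + diagCount w := by
  induction wk with
  | nil => simp
  | cons h _ ih =>
    have := diagCount_le_of_adj h
    rw [SimpleGraph.Walk.length_cons]
    omega

theorem diagCount_le_dist {v b : PVert n} (hb : IsBoundary b) (hvb : (pathGraph n).Reachable v b) :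
    diagCount v ≤ (pathGraph n).dist v b := by
  obtain ⟨wk, hwk⟩ := hvb.exists_walk_length_eq_dist
  simpa only [diagCount_eq_zero_iff.mpr hb, hwk, add_zero] using diagCount_le_length_add wk

theorem card_hullEdges_le : (Finset.univ.filter (IsHullEdge (n := n))).card ≤ n := by
  calc _ ≤ (Finset.univ.image fun i : Fin n =>
        s(i, ⟨(i.val + 1) % n, Nat.mod_lt _ i.pos⟩)).card := by
        refine Finset.card_le_card fun e he => ?_
        obtain ⟨a, b, rfl, hab | hab⟩ := (Finset.mem_filter.mp he).2
        · exact Finset.mem_image.mpr ⟨a, Finset.mem_univ _, congrArg (s(a, ·)) (Fin.ext hab)⟩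
        · exact Finset.mem_image.mpr
            ⟨b, Finset.mem_univ _, (congrArg (s(b, ·)) (Fin.ext hab)).trans Sym2.eq_swap⟩
    _ ≤ Finset.univ.card := Finset.card_image_le
    _ = n := Finset.card_fin n

theorem pathGraph_adj_of_isBoundary {u w : PVert n} (hu : IsBoundary u) (hw : IsBoundary w)
    (hne : u ≠ w) : (pathGraph n).Adj u w := by
  have hunion : (u.1 ∪ w.1).card ≤ n := (Finset.card_le_card fun e he => Finset.mem_filter.mpr
    ⟨Finset.mem_univ e, (Finset.mem_union.mp he).elim (hu e) (hw e)⟩).trans card_hullEdges_le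
  have hsdiff : ∀ {x y : PVert n}, x ≠ y → (x.1 \ y.1).card ≠ 0 := fun hxy h0 =>
    hxy (Subtype.ext (Finset.eq_of_subset_of_card_le (Finset.sdiff_eq_empty_iff_subset.mp
      (Finset.card_eq_zero.mp h0)) (by rw [card_edges, card_edges])))
  have h₁ := hsdiff hne
  have h₂ := hsdiff hne.symm
  have hu' := Finset.card_sdiff_add_card u.1 w.1
  have hw' := Finset.card_sdiff_add_card w.1 u.1
  rw [Finset.union_comm, card_edges] at hw'
  rw [card_edges] at hu'
  refine ⟨hne, ?_⟩
  rw [Finset.card_union_of_disjoint disjoint_sdiff_sdiff]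
  omega

theorem reachable_of_isBoundary {u w : PVert n} (hu : IsBoundary u) (hw : IsBoundary w) :
    (pathGraph n).Reachable u w := by
  by_cases huw : u = w
  · exact huw ▸ SimpleGraph.Reachable.refl u
  · exact (pathGraph_adj_of_isBoundary hu hw huw).reachable

theorem exists_walk_isBoundary (v : PVert n) :
    ∃ b, IsBoundary b ∧ ∃ wk : (pathGraph n).Walk v b, wk.length ≤ diagCount v := by
  induction hk : diagCount v generalizing v with
  | zero => exact ⟨v, diagCount_eq_zero_iff.mp hk, .nil, le_rfl⟩
  | succ k ih =>
    obtain ⟨w, hvw, hw⟩ := exists_adj_diagCount_add_one v (by omega)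
    obtain ⟨b, hb, wk, hwk⟩ := ih w (by omega)
    exact ⟨b, hb, .cons hvw wk, by rw [SimpleGraph.Walk.length_cons]; omega⟩

end Distance

theorem dist_to_boundary_eq_diagCount_general (n : ℕ) (v : PVert n) :
    sInf {d : ℕ | ∃ b : PVert n, IsBoundary b ∧ d = (pathGraph n).dist v b} =
      diagCount v := by
  obtain ⟨b₀, hb₀, wk, hwk⟩ := exists_walk_isBoundary v
  have hle : ∀ b, IsBoundary b → diagCount v ≤ (pathGraph n).dist v b := fun b hb =>
    diagCount_le_dist hb (wk.reachable.trans (reachable_of_isBoundary hb₀ hb))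
  refine IsLeast.csInf_eq
    ⟨⟨b₀, hb₀, le_antisymm (hle b₀ hb₀) ((SimpleGraph.dist_le wk).trans hwk)⟩, ?_⟩
  rintro _ ⟨b, hb, rfl⟩
  exact hle b hb

/-- The distance in `G(P)` from any vertex `v` to the set of boundary paths equals
the number of diagonals of `v`. -/
theorem dist_to_boundary_eq_diagCount (n : ℕ) (hn : 3 ≤ n) (v : PVert n) :
    sInf {d : ℕ | ∃ b : PVert n, IsBoundary b ∧ d = (pathGraph n).dist v b} =
      diagCount v :=
  dist_to_boundary_eq_diagCount_general n v

end PG
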